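/- In the scale context, suppose in addition that J is θ-complete, χ is a cardinal with κ ≤ χ, ζ ≤ θ is a limit ordinal, and λ = χ^{+ζ}. Let δ be a limit ordinal with κ < cf(δ) < λ such that ⟨f_α : α < δ⟩ has a <_J-exact upper bound f* with {i < κ : cf(f*(i)) ≤ κ} ∈ J, and put λ^δ_i = cf(f*(i)). Then: (i) if δ ∈ S^gd then {i < κ : λ^δ_i ≠ cf(δ)} ∈ J; (ii) if δ ∈ S^bd and δ is not weakly f̄-good then {i < κ : λ^δ_i ≥ χ} ∈ J. -/

import Mathlib

open Cardinal Set

noncomputable section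

/-- The `β`-th iterated cardinal successor of `χ`. -/
noncomputable def succIter (χ : Cardinal.{0}) (β : Ordinal.{0}) : Cardinal :=
  Ordinal.limitRecOn β χ (fun _ ih => Order.succ ih)
    (fun β _ ih => ⨆ γ : Iio β, ih γ.1 γ.2)

/-- `J` is a proper ideal on `{i : i < κ}`. -/
structure IsIdealOn (κ : Ordinal.{0}) (J : Set (Set Ordinal)) : Prop where
  subset_mem : ∀ s ∈ J, s ⊆ Iio κ
  empty_mem : ∅ ∈ J
  mono : ∀ s ∈ J, ∀ t ⊆ s, t ∈ J
  union_mem : ∀ s ∈ J, ∀ t ∈ J, s ∪ t ∈ J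
  proper : Iio κ ∉ J

/-- The ideal of bounded subsets of `κ`. -/
def boundedIdeal (κ : Ordinal.{0}) : Set (Set Ordinal) := {s | ∃ j < κ, s ⊆ Iio j}

/-- `J` is `θ`-complete: closed under unions of fewer than `θ` of its members. -/
def IsCompleteIdeal (θ : Cardinal.{0}) (J : Set (Set Ordinal)) : Prop :=
  ∀ S : Set (Set Ordinal), S ⊆ J → #S < Cardinal.lift.{1,0} θ → ⋃₀ S ∈ J

/-- `f <_J g` : `{i < κ : f i ≥ g i} ∈ J`. -/
def ltMod (κ : Ordinal.{0}) (J : Set (Set Ordinal)) (f g : Ordinal → Ordinal) : Prop :=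
  {i | i < κ ∧ g i ≤ f i} ∈ J

/-- `h` is a `<_J`-exact upper bound of `⟨f α : α < δ⟩`. -/
def IsEub (κ : Ordinal.{0}) (J : Set (Set Ordinal)) (δ : Ordinal.{0})
    (f : Ordinal → Ordinal → Ordinal) (h : Ordinal → Ordinal) : Prop :=
  (∀ α < δ, ltMod κ J (f α) h) ∧
    ∀ g : Ordinal → Ordinal, ltMod κ J g h → ∃ α < δ, ltMod κ J g (f α)

/-- `D` is an ultrafilter on `{i : i < κ}`. -/
structure IsUltrafilterOn (κ : Ordinal.{0}) (D : Set (Set Ordinal)) : Prop where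
  subset_mem : ∀ s ∈ D, s ⊆ Iio κ
  inter_mem : ∀ s ∈ D, ∀ t ∈ D, s ∩ t ∈ D
  superset_mem : ∀ s ∈ D, ∀ t, t ⊆ Iio κ → s ⊆ t → t ∈ D
  empty_not_mem : ∅ ∉ D
  ultra : ∀ s, s ⊆ Iio κ → s ∈ D ∨ Iio κ \ s ∈ D

/-- `f <_D g` : `{i < κ : f i < g i} ∈ D`. -/
def ltModD (κ : Ordinal.{0}) (D : Set (Set Ordinal)) (f g : Ordinal → Ordinal) : Prop :=
  {i | i < κ ∧ f i < g i} ∈ D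

/-- `δ` is a good point for the sequence `f` (with respect to the ideal `J` on `κ`). -/
def IsGoodPt (κ : Ordinal.{0}) (J : Set (Set Ordinal)) (f : Ordinal → Ordinal → Ordinal)
    (δ : Ordinal.{0}) : Prop :=
  ∃ A : Set Ordinal, A ⊆ Iio δ ∧ (∀ β < δ, ∃ α ∈ A, β < α) ∧
    ∃ s : Ordinal → Set Ordinal, (∀ α ∈ A, s α ∈ J) ∧
      ∀ i < κ, ∀ α ∈ A, ∀ β ∈ A, α < β → i ∉ s α → i ∉ s β → f α i < f β i

/-- `δ` is a weakly good point for `f`. -/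
def IsWeaklyGoodPt (κ : Ordinal.{0}) (J : Set (Set Ordinal)) (f : Ordinal → Ordinal → Ordinal)
    (δ : Ordinal.{0}) : Prop :=
  ∃ t : Set Ordinal, t ⊆ Iio κ ∧ t ∉ J ∧
    ∃ A : Set Ordinal, A ⊆ Iio δ ∧ (∀ β < δ, ∃ α ∈ A, β < α) ∧
      ∃ s : Ordinal → Set Ordinal, (∀ α ∈ A, s α ∈ J) ∧
        ∀ i ∈ t, ∀ α ∈ A, ∀ β ∈ A, α < β → i ∉ s α → i ∉ s β → f α i < f β i

/-- `δ` is a chaotic point for `f`. -/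
def IsChaoticPt (κ : Ordinal.{0}) (J : Set (Set Ordinal)) (f : Ordinal → Ordinal → Ordinal)
    (δ : Ordinal.{0}) : Prop :=
  (∃ D : Set (Set Ordinal), IsUltrafilterOn κ D ∧ (∀ s ∈ J, s ∉ D) ∧
    ∃ a : Ordinal → Set Ordinal, (∀ i < κ, #(a i) ≤ Cardinal.lift.{1,0} κ.card) ∧
      ∀ α < δ, ∃ β, α < β ∧ β < δ ∧ ∃ g : Ordinal → Ordinal,
        (∀ i < κ, g i ∈ a i) ∧ ltModD κ D (f α) g ∧ ltModD κ D g (f β)) ∨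
  (∃ A : Set Ordinal, A ⊆ Iio δ ∧ (∀ β < δ, ∃ α ∈ A, β < α) ∧
    ∃ g : Ordinal → Ordinal, ∀ α ∈ A, ∀ β ∈ A, α < β →
      {i | i < κ ∧ f β i ≤ g i} \ {i | i < κ ∧ f α i ≤ g i} ∈ J ∧
      {i | i < κ ∧ f α i ≤ g i} \ {i | i < κ ∧ f β i ≤ g i} ∉ J)

/-- The set of good points `δ < λ⁺` with `κ < cf δ < λ`. -/
def Sgd (κ lam : Cardinal.{0}) (J : Set (Set Ordinal)) (f : Ordinal → Ordinal → Ordinal) :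
    Set Ordinal :=
  {δ | δ < (Order.succ lam).ord ∧ Order.IsSuccLimit δ ∧ κ < δ.cof ∧ δ.cof < lam ∧ IsGoodPt κ.ord J f δ}

/-- The set of bad points `δ < λ⁺` with `κ < cf δ < λ`. -/
def Sbd (κ lam : Cardinal.{0}) (J : Set (Set Ordinal)) (f : Ordinal → Ordinal → Ordinal) :
    Set Ordinal :=
  {δ | δ < (Order.succ lam).ord ∧ Order.IsSuccLimit δ ∧ κ < δ.cof ∧ δ.cof < lam ∧
    (∃ h : Ordinal → Ordinal, IsEub κ.ord J δ f h ∧ {i | i < κ.ord ∧ (h i).cof ≤ κ} ∈ J) ∧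
    ¬ IsGoodPt κ.ord J f δ}

/-- The set of chaotic points `δ < λ⁺` with `κ < cf δ < λ`. -/
def Sch (κ lam : Cardinal.{0}) (J : Set (Set Ordinal)) (f : Ordinal → Ordinal → Ordinal) :
    Set Ordinal :=
  {δ | δ < (Order.succ lam).ord ∧ Order.IsSuccLimit δ ∧ κ < δ.cof ∧ δ.cof < lam ∧ IsChaoticPt κ.ord J f δ}

/-- `C` is a club (closed unbounded) subset of `δ`. -/
def IsClubIn (C : Set Ordinal) (δ : Ordinal.{0}) : Prop :=
  C ⊆ Iio δ ∧ (∀ α < δ, ∃ β ∈ C, α < β) ∧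
    ∀ α < δ, 0 < α → (∀ β < α, ∃ γ ∈ C, β < γ ∧ γ < α) → α ∈ C

/-- `S` is stationary in `δ`. -/
def IsStationaryIn (S : Set Ordinal) (δ : Ordinal.{0}) : Prop :=
  ∀ C : Set Ordinal, IsClubIn C δ → (S ∩ C).Nonempty

/-- `(∏_{i<κ} θs i, <_J)` has true cofinality `σ`. -/
def HasTrueCofinality (κ : Ordinal.{0}) (J : Set (Set Ordinal)) (θs : Ordinal → Cardinal)
    (σ : Cardinal.{0}) : Prop :=
  σ.IsRegular ∧ ∃ g : Ordinal → Ordinal → Ordinal,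
    (∀ ξ < σ.ord, ∀ i < κ, g ξ i < (θs i).ord) ∧
    (∀ ξ < σ.ord, ∀ ξ' < σ.ord, ξ < ξ' → ltMod κ J (g ξ) (g ξ')) ∧
    ∀ h : Ordinal → Ordinal, (∀ i < κ, h i < (θs i).ord) → ∃ ξ < σ.ord, ltMod κ J h (g ξ)

/-- `S_{<θ}(X)` : the subsets of `X` of cardinality `< θ`. -/
def SetLt (θ : Cardinal.{0}) (X : Set Ordinal) : Set (Set Ordinal) :=
  {a | a ⊆ X ∧ #a < Cardinal.lift.{1,0} θ}

/-- `C` is a club in `S_{<θ}(X)` : cofinal and closed under unions of increasing chains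
of length `< θ`. -/
def IsClubInSetLt (θ : Cardinal.{0}) (X : Set Ordinal) (C : Set (Set Ordinal)) : Prop :=
  C ⊆ SetLt θ X ∧ (∀ a ∈ SetLt θ X, ∃ b ∈ C, a ⊆ b) ∧
    ∀ β : Ordinal, 0 < β → β < θ.ord → ∀ c : Ordinal → Set Ordinal,
      (∀ i < β, c i ∈ C) → (∀ i < β, ∀ j < β, i ≤ j → c i ⊆ c j) →
      (⋃ i ∈ Iio β, c i) ∈ C

/-- `S` is stationary in `S_{<θ}(X)`. -/
def IsStationaryInSetLt (θ : Cardinal.{0}) (X : Set Ordinal) (S : Set (Set Ordinal)) : Prop :=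
  ∀ C : Set (Set Ordinal), IsClubInSetLt θ X C → (S ∩ C).Nonempty

/-- `NPT(λ, θ)` : there is a family `⟨A i : i < λ⟩` of subsets of `λ`, each of cardinality
`≤ θ`, with no transversal, while every proper initial segment has a transversal. -/
def NPT (lam θ : Cardinal.{0}) : Prop :=
  ∃ A : Ordinal → Set Ordinal,
    (∀ i < lam.ord, A i ⊆ Iio lam.ord ∧ #(A i) ≤ Cardinal.lift.{1,0} θ) ∧
    (¬ ∃ F : Ordinal → Ordinal, (∀ i < lam.ord, F i ∈ A i) ∧ InjOn F (Iio lam.ord)) ∧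
    ∀ α < lam.ord, ∃ F : Ordinal → Ordinal, (∀ i < α, F i ∈ A i) ∧ InjOn F (Iio α)

end

/-!
(i) Along an unbounded `A ⊆ δ` witnessing goodness, put `H i = sup {f α i : α ∈ A, i ∉ s α}`.
For `J`-almost every `i` this is the supremum of a strictly increasing family indexed by a
cofinal subset of `δ`, so `cf (H i) = cf δ`; exactness of `f*` together with `κ < cf δ` gives
`H = f*` modulo `J`.

(ii) For any exact upper bound, `cf (f* i) ≤ cf δ` modulo `J`: otherwise the values of `f` along a
cofinal sequence of `δ` stay bounded below `f*` on a `J`-positive set. If `cf (f* i) = σ` on a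
`J`-positive set `L`, with `σ` regular and `κ < σ`, then cofinal `σ`-sequences in the `f* i`
interleave with `⟨f α : α < δ⟩`, and sampling at closure points of the interleaving makes `δ`
weakly good. So if `δ` is not weakly good, every level set `{i : cf (f* i) = χ^{+γ}}` is in `J`;
as `cf δ < χ^{+ζ}`, only the fewer than `θ` levels `γ ≤ γ₀` for some `γ₀ < ζ` occur.
-/

open Order

universe u

namespace Ordinal

theorem iSup_Iio_lt_of_card_lt_cof {o a : Ordinal.{u}} (ho : o.card < a.cof)
    {g : Ordinal → Ordinal} (hg : ∀ i < o, g i < a) : ⨆ i : Iio o, g i < a := by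
  apply lift_iSup_lt_of_lt_cof (f := fun i : Iio o => g i) _ fun i => hg i i.2
  rwa [Cardinal.mk_Iio_ordinal, ← lift_cof, Cardinal.lift_id'.{u, u + 1}, Cardinal.lift_lt]

theorem exists_lt_forall_le_of_card_lt_cof {o a : Ordinal.{u}} (ho : o.card < a.cof)
    {p : Ordinal → Prop} {b : Ordinal → Ordinal} (hb : ∀ i < o, p i → b i < a) :
    ∃ c < a, ∀ i < o, p i → b i ≤ c := by
  classical
  have ha : 0 < a := pos_iff_ne_zero.2 fun h => by simp [h] at ho
  refine ⟨⨆ i : Iio o, if p i then b i else 0,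
    iSup_Iio_lt_of_card_lt_cof (g := fun i => if p i then b i else 0) ho fun i hi => ?_,
    fun i hi hpi => ?_⟩
  · split_ifs with h
    exacts [hb i hi h, ha]
  · simpa [hpi] using Ordinal.le_iSup (fun i : Iio o => if p i then b i else 0) ⟨i, hi⟩

theorem exists_strictMonoOn_cofinal {a : Ordinal.{u}} (ha : IsSuccLimit a) :
    ∃ e : Ordinal → Ordinal, StrictMonoOn e (Iio a.cof.ord) ∧ (∀ ρ < a.cof.ord, e ρ < a) ∧
      ∀ c < a, ∃ ρ < a.cof.ord, c < e ρ := by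
  classical
  obtain ⟨F, hF⟩ := exists_isFundamentalSeq (o := a) rfl
  set e : Ordinal → Ordinal := fun ρ => if h : ρ < a.cof.ord then F ⟨ρ, h⟩ else 0
  have he : ∀ ρ (h : ρ < a.cof.ord), e ρ = F ⟨ρ, h⟩ := fun ρ h => dif_pos h
  refine ⟨e, fun ρ hρ ρ' hρ' h => ?_, fun ρ hρ => ?_, fun c hc => ?_⟩
  · rw [he ρ hρ, he ρ' hρ']
    exact hF.strictMono (show (⟨ρ, hρ⟩ : Iio _) < ⟨ρ', hρ'⟩ from h)
  · rw [he ρ hρ]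
    exact (F ⟨ρ, hρ⟩).2
  · obtain ⟨_, ⟨ρ, rfl⟩, hρ⟩ := hF.isCofinal_range ⟨succ c, ha.succ_lt hc⟩
    refine ⟨ρ, ρ.2, ?_⟩
    rw [he ρ ρ.2]
    exact (lt_succ c).trans_le hρ

theorem cof_iSup_eq_cof_of_strictMonoOn {δ : Ordinal.{u}} {B : Set Ordinal.{u}} (hB : B ⊆ Iio δ)
    (hBcof : ∀ β < δ, ∃ α ∈ B, β < α) {v : Ordinal → Ordinal} (hv : StrictMonoOn v B) :
    (⨆ α : B, v α).cof = δ.cof := by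
  have : Small.{u} B := small_subset hB
  have : NoMaxOrder B := ⟨fun α => by
    obtain ⟨β, hβ, h⟩ := hBcof α (hB α.2)
    exact ⟨⟨β, hβ⟩, h⟩⟩
  have hsup := lift_cof_iSup (f := fun α : B => v α) fun x y h => hv x.2 y.2 h
  have hincl := Order.lift_cof_congr_of_strictMono (f := fun α : B => (⟨α, hB α.2⟩ : Iio δ))
    (fun x y h => h) fun β => by
      obtain ⟨α, hα, h⟩ := hBcof β β.2
      exact ⟨_, ⟨⟨α, hα⟩, rfl⟩, h.le⟩
  rw [cof_Iio, ← lift_cof, Cardinal.lift_id, Cardinal.lift_id] at hincl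
  rw [Cardinal.lift_id'.{u, u + 1}, hincl] at hsup
  exact Cardinal.lift_injective hsup

theorem exists_closurePoint_of_isRegular {σ : Cardinal.{u}} (hσ : σ.IsRegular)
    (hσ₀ : ℵ₀ < σ) {g : Ordinal → Ordinal} (hg : ∀ x < σ.ord, g x < σ.ord) {a : Ordinal}
    (ha : a < σ.ord) : ∃ b < σ.ord, a ≤ b ∧ ∀ x < b, g x ≤ b := by
  set G : Ordinal → Ordinal := fun y => ⨆ x : Iio y, g x
  have hG : ∀ y < σ.ord, G y < σ.ord := fun y hy =>
    iSup_Iio_lt_of_card_lt_cof (by rwa [hσ.cof_ord, ← Cardinal.lt_ord])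
      fun x hx => hg x (hx.trans hy)
  refine ⟨nfp G a, nfp_lt_ord (by rwa [hσ.cof_ord]) hG ha, le_nfp G a, fun x hx => ?_⟩
  obtain ⟨n, hn⟩ := lt_nfp_iff.1 hx
  calc g x ≤ G (G^[n] a) := Ordinal.le_iSup (fun x : Iio (G^[n] a) => g x) ⟨x, hn⟩
    _ = G^[n + 1] a := (Function.iterate_succ_apply' G n a).symm
    _ ≤ nfp G a := iterate_le_nfp G a (n + 1)

end Ordinal

section Eub

variable {κ δ : Ordinal.{0}} {J : Set (Set Ordinal.{0})}
  {f : Ordinal.{0} → Ordinal.{0} → Ordinal.{0}} {fstar : Ordinal.{0} → Ordinal.{0}}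

theorem setOf_eub_eq_zero_mem (hJ : IsIdealOn κ J) (hδ : 0 < δ) (hfstar : IsEub κ J δ f fstar) :
    {i | i < κ ∧ fstar i = 0} ∈ J :=
  hJ.mono _ (hfstar.1 0 hδ) _ fun _ ⟨hi, h0⟩ => ⟨hi, h0.trans_le zero_le⟩

theorem setOf_lt_mem_of_le (hJ : IsIdealOn κ J)
    (hinc : ∀ α < δ, ∀ β < δ, α < β → ltMod κ J (f α) (f β)) {α β : Ordinal}
    (hβ : β < δ) (hαβ : α ≤ β) : {i | i < κ ∧ f β i < f α i} ∈ J := by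
  rcases hαβ.lt_or_eq with h | rfl
  · exact hJ.mono _ (hinc α (h.trans hβ) β hβ h) _ fun i ⟨hi, hlt⟩ => ⟨hi, hlt.le⟩
  · simpa using hJ.empty_mem

theorem setOf_cof_lt_cof_eub_mem (hJ : IsIdealOn κ J) (hδ : IsSuccLimit δ)
    (hfstar : IsEub κ J δ f fstar) (hinc : ∀ α < δ, ∀ β < δ, α < β → ltMod κ J (f α) (f β)) :
    {i | i < κ ∧ δ.cof < (fstar i).cof} ∈ J := by
  classical
  set t := {i | i < κ ∧ δ.cof < (fstar i).cof}
  obtain ⟨F, -, hFδ, hFcof⟩ := Ordinal.exists_strictMonoOn_cofinal hδ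
  have hbound : ∀ i ∈ t, ∃ c < fstar i, ∀ ρ < δ.cof.ord, f (F ρ) i < fstar i → f (F ρ) i ≤ c :=
    fun i hi => Ordinal.exists_lt_forall_le_of_card_lt_cof
      (by rw [Cardinal.card_ord]; exact hi.2) fun ρ _ h => h
  choose! c hc hFc using hbound
  set g : Ordinal → Ordinal := fun i => if i ∈ t then c i else 0
  have hg : ltMod κ J g fstar := by
    refine hJ.mono _ (setOf_eub_eq_zero_mem hJ hδ.pos hfstar) _ fun i ⟨hi, hle⟩ => ⟨hi, ?_⟩
    by_cases hit : i ∈ t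
    · simp only [g, if_pos hit] at hle
      exact absurd hle (hc i hit).not_ge
    · simpa [g, hit] using hle
  obtain ⟨α, hαδ, hgα⟩ := hfstar.2 g hg
  obtain ⟨ρ, hρ, hαρ⟩ := hFcof α hαδ
  refine hJ.mono _ (hJ.union_mem _ (hJ.union_mem _ hgα _ (hfstar.1 _ (hFδ ρ hρ))) _
    (hinc α hαδ _ (hFδ ρ hρ) hαρ)) _ fun i hit => ?_
  by_contra! hi
  simp only [mem_union, mem_ofPred_eq, not_or, not_and, not_le] at hi
  have hαg : f α i ≤ g i := by
    simp only [g, if_pos hit]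
    exact (hi.2 hit.1).le.trans (hFc i hit ρ hρ (hi.1.2 hit.1))
  exact (hi.1.1 hit.1).not_ge hαg

end Eub

section Good

noncomputable def goodSup (A : Set Ordinal.{0}) (s : Ordinal.{0} → Set Ordinal.{0})
    (f : Ordinal.{0} → Ordinal.{0} → Ordinal.{0}) (i : Ordinal.{0}) : Ordinal.{0} :=
  ⨆ α : {α | α ∈ A ∧ i ∉ s α}, f α i

variable {κ δ : Ordinal.{0}} {J : Set (Set Ordinal.{0})}
  {f : Ordinal.{0} → Ordinal.{0} → Ordinal.{0}} {fstar : Ordinal.{0} → Ordinal.{0}}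
  {A : Set Ordinal.{0}} {s : Ordinal.{0} → Set Ordinal.{0}}

theorem le_goodSup (hAδ : A ⊆ Iio δ) {i α : Ordinal} (hα : α ∈ A) (hi : i ∉ s α) :
    f α i ≤ goodSup A s f i := by
  have : Small.{0} ({α | α ∈ A ∧ i ∉ s α} : Set Ordinal.{0}) :=
    small_subset (s := Iio δ) fun _ hα => hAδ hα.1
  exact Ordinal.le_iSup (fun α : {α | α ∈ A ∧ i ∉ s α} => f α i) ⟨α, hα, hi⟩

theorem lt_goodSup_iff (hAδ : A ⊆ Iio δ) {i c : Ordinal} :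
    c < goodSup A s f i ↔ ∃ α ∈ A, i ∉ s α ∧ c < f α i := by
  have : Small.{0} ({α | α ∈ A ∧ i ∉ s α} : Set Ordinal.{0}) :=
    small_subset (s := Iio δ) fun _ hα => hAδ hα.1
  rw [goodSup, Ordinal.lt_iSup_iff]
  exact ⟨fun ⟨⟨α, hαA, hα⟩, h⟩ => ⟨α, hαA, hα, h⟩, fun ⟨α, hαA, hα, h⟩ => ⟨⟨α, hαA, hα⟩, h⟩⟩

theorem exists_mem_forall_lt_of_card_lt_cof (hκδ : κ.card < δ.cof)
    (hAcof : ∀ β < δ, ∃ α ∈ A, β < α) {p : Ordinal → Prop} {b : Ordinal → Ordinal}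
    (hb : ∀ i < κ, p i → b i < δ) : ∃ β ∈ A, ∀ i < κ, p i → b i < β := by
  obtain ⟨c, hc, hbc⟩ := Ordinal.exists_lt_forall_le_of_card_lt_cof hκδ hb
  obtain ⟨β, hβA, hcβ⟩ := hAcof c hc
  exact ⟨β, hβA, fun i hi hp => (hbc i hi hp).trans_lt hcβ⟩

theorem setOf_not_cofinal_mem (hJ : IsIdealOn κ J) (hκδ : κ.card < δ.cof)
    (hAcof : ∀ β < δ, ∃ α ∈ A, β < α) (hsJ : ∀ α ∈ A, s α ∈ J) :
    {i | i < κ ∧ ¬ ∀ β < δ, ∃ α ∈ A, i ∉ s α ∧ β < α} ∈ J := by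
  have hbd : ∀ i, (¬ ∀ β < δ, ∃ α ∈ A, i ∉ s α ∧ β < α) →
      ∃ β < δ, ∀ α ∈ A, i ∉ s α → α ≤ β := fun i hi => by
    push Not at hi
    exact hi
  choose! b hbδ hb using hbd
  obtain ⟨β, hβA, hβ⟩ := exists_mem_forall_lt_of_card_lt_cof hκδ hAcof fun i _ hi => hbδ i hi
  refine hJ.mono _ (hsJ β hβA) _ fun i ⟨hi, hnc⟩ => ?_
  by_contra his
  exact (hβ i hi hnc).not_ge (hb i hnc β hβA his)

theorem setOf_goodSup_lt_eub_mem (hJ : IsIdealOn κ J) (hδ : 0 < δ)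
    (hfstar : IsEub κ J δ f fstar) (hinc : ∀ α < δ, ∀ β < δ, α < β → ltMod κ J (f α) (f β))
    (hAδ : A ⊆ Iio δ) (hAcof : ∀ β < δ, ∃ α ∈ A, β < α) (hsJ : ∀ α ∈ A, s α ∈ J) :
    {i | i < κ ∧ goodSup A s f i < fstar i} ∈ J := by
  classical
  set H := goodSup A s f
  set g : Ordinal → Ordinal := fun i => if H i < fstar i then H i else 0
  have hg : ltMod κ J g fstar := by
    refine hJ.mono _ (setOf_eub_eq_zero_mem hJ hδ hfstar) _ fun i ⟨hi, hle⟩ => ⟨hi, ?_⟩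
    by_cases h : H i < fstar i
    · simp only [g, if_pos h] at hle
      exact absurd hle h.not_ge
    · simpa [g, h] using hle
  obtain ⟨α, hαδ, hgα⟩ := hfstar.2 g hg
  obtain ⟨β, hβA, hαβ⟩ := hAcof α hαδ
  refine hJ.mono _ (hJ.union_mem _ (hJ.union_mem _ hgα _ (hsJ β hβA)) _
    (hinc α hαδ β (hAδ hβA) hαβ)) _ fun i ⟨hi, hHi⟩ => ?_
  by_contra! hcon
  simp only [mem_union, mem_ofPred_eq, not_or, not_and, not_le] at hcon
  have hgH : g i = H i := if_pos hHi
  exact ((hgH ▸ hcon.1.1 hi).trans (hcon.2 hi)).not_ge (le_goodSup hAδ hβA hcon.1.2)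

theorem setOf_eub_lt_goodSup_mem (hJ : IsIdealOn κ J) (hκδ : κ.card < δ.cof)
    (hfstar : IsEub κ J δ f fstar) (hAδ : A ⊆ Iio δ) (hAcof : ∀ β < δ, ∃ α ∈ A, β < α)
    (hsJ : ∀ α ∈ A, s α ∈ J)
    (hmono : ∀ i < κ, ∀ α ∈ A, ∀ β ∈ A, α < β → i ∉ s α → i ∉ s β → f α i < f β i) :
    {i | i < κ ∧ fstar i < goodSup A s f i} ∈ J := by
  have hwit : ∀ i, fstar i < goodSup A s f i → ∃ α ∈ A, i ∉ s α ∧ fstar i < f α i :=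
    fun _ hi => (lt_goodSup_iff hAδ).1 hi
  choose! a haA has ha using hwit
  obtain ⟨β, hβA, hβ⟩ :=
    exists_mem_forall_lt_of_card_lt_cof hκδ hAcof fun i _ hi => hAδ (haA i hi)
  refine hJ.mono _ (hJ.union_mem _ (hsJ β hβA) _ (hfstar.1 β (hAδ hβA))) _
    fun i ⟨hi, hlt⟩ => ?_
  by_cases his : i ∈ s β
  · exact Or.inl his
  · exact Or.inr ⟨hi, ((ha i hlt).trans
      (hmono i hi _ (haA i hlt) β hβA (hβ i hi hlt) (has i hlt) his)).le⟩

theorem setOf_cof_eub_ne_cof_mem_of_isGoodPt (hJ : IsIdealOn κ J) (hδ : 0 < δ)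
    (hκδ : κ.card < δ.cof) (hfstar : IsEub κ J δ f fstar)
    (hinc : ∀ α < δ, ∀ β < δ, α < β → ltMod κ J (f α) (f β)) (hgood : IsGoodPt κ J f δ) :
    {i | i < κ ∧ (fstar i).cof ≠ δ.cof} ∈ J := by
  obtain ⟨A, hAδ, hAcof, s, hsJ, hmono⟩ := hgood
  refine hJ.mono _ (hJ.union_mem _ (hJ.union_mem _ (setOf_not_cofinal_mem hJ hκδ hAcof hsJ) _
    (setOf_goodSup_lt_eub_mem hJ hδ hfstar hinc hAδ hAcof hsJ)) _
    (setOf_eub_lt_goodSup_mem hJ hκδ hfstar hAδ hAcof hsJ hmono)) _ fun i ⟨hi, hne⟩ => ?_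
  by_contra hcon
  simp only [mem_union, not_or] at hcon
  obtain ⟨⟨hcof, hge⟩, hle⟩ := hcon
  have hcof : ∀ β < δ, ∃ α ∈ A, i ∉ s α ∧ β < α := by_contra fun h => hcof ⟨hi, h⟩
  have hfH : fstar i = goodSup A s f i :=
    le_antisymm (not_lt.1 fun h => hge ⟨hi, h⟩) (not_lt.1 fun h => hle ⟨hi, h⟩)
  refine hne (hfH ▸ Ordinal.cof_iSup_eq_cof_of_strictMonoOn (fun α hα => hAδ hα.1)
    (fun β hβ => ?_) fun α hα β hβ hαβ => hmono i hi α hα.1 β hβ.1 hαβ hα.2 hβ.2)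
  obtain ⟨α, hαA, hα, hβα⟩ := hcof β hβ
  exact ⟨α, ⟨hαA, hα⟩, hβα⟩

end Good

section WeaklyGood

variable {κ δ : Ordinal.{0}} {J : Set (Set Ordinal.{0})}
  {f : Ordinal.{0} → Ordinal.{0} → Ordinal.{0}} {fstar : Ordinal.{0} → Ordinal.{0}}
  {L : Set Ordinal.{0}} {σ : Cardinal.{0}}

theorem lt_of_separated (hJ : IsIdealOn κ J)
    (hinc : ∀ α < δ, ∀ β < δ, α < β → ltMod κ J (f α) (f β)) (hLκ : L ⊆ Iio κ) (hLJ : L ∉ J)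
    {g : Ordinal.{0} → Ordinal.{0}} {α β : Ordinal.{0}} (hα : α < δ)
    (hβ : {i | i ∈ L ∧ f β i ≤ g i} ∈ J) (hα' : {i | i ∈ L ∧ g i ≤ f α i} ∈ J) : α < β := by
  by_contra! hle
  refine hLJ (hJ.mono _ (hJ.union_mem _ (hJ.union_mem _ hβ _ hα') _
    (setOf_lt_mem_of_le hJ hinc hα hle)) _ fun i hiL => ?_)
  by_contra hcon
  simp only [mem_union, mem_ofPred_eq, not_or, not_and, not_le] at hcon
  exact hcon.2 (hLκ hiL) ((hcon.1.2 hiL).trans (hcon.1.1 hiL))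

theorem isWeaklyGoodPt_of_interleaved (hJ : IsIdealOn κ J)
    (hinc : ∀ α < δ, ∀ β < δ, α < β → ltMod κ J (f α) (f β)) (hLκ : L ⊆ Iio κ) (hLJ : L ∉ J)
    (hσ : σ.IsRegular) (hσ₀ : ℵ₀ < σ) {h : Ordinal → Ordinal → Ordinal}
    (hh : ∀ i ∈ L, MonotoneOn (h · i) (Iio σ.ord))
    (hfh : ∀ ξ < σ.ord, ∃ α < δ, {i | i ∈ L ∧ f α i ≤ h ξ i} ∈ J)
    (hhf : ∀ α < δ, ∃ η < σ.ord, {i | i ∈ L ∧ h η i ≤ f α i} ∈ J) :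
    IsWeaklyGoodPt κ J f δ := by
  classical
  choose! η hησ hη using hhf
  set m : Ordinal → Ordinal := fun ξ => sInf {α | α < δ ∧ {i | i ∈ L ∧ f α i ≤ h ξ i} ∈ J}
  have hm : ∀ ξ < σ.ord, m ξ < δ ∧ {i | i ∈ L ∧ f (m ξ) i ≤ h ξ i} ∈ J := fun ξ hξ =>
    csInf_mem (hfh ξ hξ)
  have hm_mono : ∀ ξ < σ.ord, ∀ ξ' < σ.ord, ξ ≤ ξ' → m ξ ≤ m ξ' := fun ξ hξ ξ' hξ' hle =>
    csInf_le' ⟨(hm ξ' hξ').1, hJ.mono _ (hm ξ' hξ').2 _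
      fun i ⟨hiL, hi⟩ => ⟨hiL, hi.trans (hh i hiL hξ hξ' hle)⟩⟩
  have hlt_m : ∀ α < δ, α < m (η α) := fun α hα =>
    lt_of_separated hJ hinc hLκ hLJ hα (hm _ (hησ α hα)).2 (hη α hα)
  -- For closure points `ξ < ξ'` of `η ∘ m`: `f (m ξ) < h (η (m ξ)) ≤ h ξ' < f (m ξ')` on `L`.
  set D := {ξ | ξ < σ.ord ∧ ∀ ξ' < ξ, η (m ξ') ≤ ξ}
  have hD : ∀ a < σ.ord, ∃ ξ ∈ D, a ≤ ξ := fun a ha => by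
    obtain ⟨ξ, hξ, haξ, hclosed⟩ := Ordinal.exists_closurePoint_of_isRegular hσ hσ₀
      (fun ξ' hξ' => hησ _ (hm ξ' hξ').1) ha
    exact ⟨ξ, ⟨hξ, hclosed⟩, haξ⟩
  set ξof : Ordinal → Ordinal := Function.invFunOn m D
  have hξof : ∀ α ∈ m '' D, ξof α ∈ D ∧ m (ξof α) = α := fun α hα =>
    ⟨Function.invFunOn_mem hα, Function.invFunOn_eq hα⟩
  refine ⟨L, hLκ, hLJ, m '' D, ?_, fun β hβ => ?_,
    fun α => {i | i ∈ L ∧ f α i ≤ h (ξof α) i} ∪ {i | i ∈ L ∧ h (η α) i ≤ f α i}, ?_, ?_⟩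
  · rintro _ ⟨ξ, hξ, rfl⟩
    exact (hm ξ hξ.1).1
  · obtain ⟨ξ, hξD, hηξ⟩ := hD _ (hησ β hβ)
    exact ⟨m ξ, ⟨ξ, hξD, rfl⟩,
      (hlt_m β hβ).trans_le (hm_mono _ (hησ β hβ) _ hξD.1 hηξ)⟩
  · intro α hα
    obtain ⟨hξD, hmξ⟩ := hξof α hα
    obtain ⟨hαδ, hαJ⟩ := hm _ hξD.1
    rw [hmξ] at hαδ hαJ
    exact hJ.union_mem _ hαJ _ (hη α hαδ)
  · intro i hiL α hα β hβ hαβ hsα hsβ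
    obtain ⟨hξα, hmα⟩ := hξof α hα
    obtain ⟨hξβ, hmβ⟩ := hξof β hβ
    have hξαβ : ξof α < ξof β := by
      by_contra! hle
      exact (hmβ ▸ hmα ▸ hm_mono _ hξβ.1 _ hξα.1 hle).not_gt hαβ
    have hηξ : η α ≤ ξof β := hmα ▸ hξβ.2 _ hξαβ
    have hαδ : α < δ := hmα ▸ (hm _ hξα.1).1
    simp only [mem_union, mem_ofPred_eq, not_or, not_and, not_le] at hsα hsβ
    calc f α i < h (η α) i := hsα.2 hiL
      _ ≤ h (ξof β) i := hh i hiL (hησ α hαδ) hξβ.1 hηξ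
      _ < f β i := hsβ.1 hiL

theorem isWeaklyGoodPt_of_cof_eub_eq (hJ : IsIdealOn κ J) (hδ : 0 < δ)
    (hfstar : IsEub κ J δ f fstar) (hinc : ∀ α < δ, ∀ β < δ, α < β → ltMod κ J (f α) (f β))
    (hLκ : L ⊆ Iio κ) (hLJ : L ∉ J) (hσ : σ.IsRegular) (hκσ : κ.card < σ) (hσ₀ : ℵ₀ < σ)
    (hL : ∀ i ∈ L, (fstar i).cof = σ) : IsWeaklyGoodPt κ J f δ := by
  classical
  have hseq : ∀ i ∈ L, ∃ e : Ordinal → Ordinal, StrictMonoOn e (Iio σ.ord) ∧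
      (∀ ξ < σ.ord, e ξ < fstar i) ∧ ∀ c < fstar i, ∃ ξ < σ.ord, c < e ξ := fun i hi => by
    have hlim : IsSuccLimit (fstar i) :=
      Ordinal.one_lt_cof_iff.1 (hL i hi ▸ Cardinal.one_lt_aleph0.trans hσ₀)
    simpa only [hL i hi] using Ordinal.exists_strictMonoOn_cofinal hlim
  choose! E hEmono hElt hEcof using hseq
  set h : Ordinal → Ordinal → Ordinal := fun ξ i => if i ∈ L then E i ξ else 0
  have hhE : ∀ ξ, ∀ i ∈ L, h ξ i = E i ξ := fun ξ i hi => if_pos hi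
  refine isWeaklyGoodPt_of_interleaved hJ hinc hLκ hLJ hσ hσ₀ (h := h)
    (fun i hi => ?_) (fun ξ hξ => ?_) (fun α hα => ?_)
  · simp only [hhE _ i hi]
    exact (hEmono i hi).monotoneOn
  · have hh : ltMod κ J (h ξ) fstar := by
      refine hJ.mono _ (setOf_eub_eq_zero_mem hJ hδ hfstar) _ fun i ⟨hi, hle⟩ => ⟨hi, ?_⟩
      by_cases hiL : i ∈ L
      · exact absurd (hhE ξ i hiL ▸ hle) (hElt i hiL ξ hξ).not_ge
      · simpa [h, hiL] using hle
    obtain ⟨α, hα, hhα⟩ := hfstar.2 _ hh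
    exact ⟨α, hα, hJ.mono _ hhα _ fun i ⟨hiL, hle⟩ => ⟨hLκ hiL, hle⟩⟩
  · have hwit : ∀ i ∈ L, f α i < fstar i → ∃ ξ < σ.ord, f α i < E i ξ :=
      fun i hi hlt => hEcof i hi _ hlt
    choose! ξ hξσ hξ using hwit
    obtain ⟨η, hησ, hξη⟩ := Ordinal.exists_lt_forall_le_of_card_lt_cof
      (p := fun i => i ∈ L ∧ f α i < fstar i) (by rwa [hσ.cof_ord])
      fun i _ hp => hξσ i hp.1 hp.2
    refine ⟨η, hησ, hJ.mono _ (hfstar.1 α hα) _ fun i ⟨hiL, hle⟩ => ⟨hLκ hiL, ?_⟩⟩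
    by_contra! hlt
    rw [hhE η i hiL] at hle
    exact ((hξ i hiL hlt).trans_le ((hEmono i hiL).monotoneOn (hξσ i hiL hlt) hησ
      (hξη i (hLκ hiL) ⟨hiL, hlt⟩))).not_ge hle

theorem setOf_cof_eub_eq_mem_of_not_isWeaklyGoodPt (hJ : IsIdealOn κ J) (hδ : 0 < δ)
    (hfstar : IsEub κ J δ f fstar) (hinc : ∀ α < δ, ∀ β < δ, α < β → ltMod κ J (f α) (f β))
    (hweak : ¬ IsWeaklyGoodPt κ J f δ) (hκ : ℵ₀ ≤ κ.card) (σ : Cardinal.{0}) :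
    {i | i < κ ∧ κ.card < (fstar i).cof ∧ (fstar i).cof = σ} ∈ J := by
  by_contra hL
  obtain ⟨i, -, hκi, hi⟩ : {i | i < κ ∧ κ.card < (fstar i).cof ∧ (fstar i).cof = σ}.Nonempty :=
    nonempty_iff_ne_empty.2 fun h => hL (h ▸ hJ.empty_mem)
  have hlim : IsSuccLimit (fstar i) :=
    Ordinal.one_lt_cof_iff.1 (Cardinal.one_lt_aleph0.trans_le (hκ.trans hκi.le))
  exact hweak (isWeaklyGoodPt_of_cof_eub_eq hJ hδ hfstar hinc (fun i hi => hi.1) hL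
    (hi ▸ Cardinal.isRegular_cof hlim) (hi ▸ hκi) (hi ▸ hκ.trans_lt hκi) fun i hi => hi.2.2)

end WeaklyGood

section SuccIter

variable (χ : Cardinal.{0})

theorem succIter_zero : succIter χ 0 = χ :=
  Ordinal.limitRecOn_zero _ _ _

theorem succIter_add_one (γ : Ordinal.{0}) : succIter χ (γ + 1) = succ (succIter χ γ) :=
  Ordinal.limitRecOn_add_one _ _ _ _

theorem succIter_of_isSuccLimit {ζ : Ordinal.{0}} (hζ : IsSuccLimit ζ) :
    succIter χ ζ = ⨆ γ : Iio ζ, succIter χ γ :=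
  Ordinal.limitRecOn_limit _ _ _ _ hζ

variable {χ}

theorem exists_lt_succIter_of_lt {ζ : Ordinal.{0}} (hζ : IsSuccLimit ζ) {c : Cardinal.{0}}
    (hc : c < succIter χ ζ) : ∃ γ < ζ, c < succIter χ γ := by
  rw [succIter_of_isSuccLimit χ hζ] at hc
  obtain ⟨⟨γ, hγ⟩, h⟩ := exists_lt_of_lt_ciSup' hc
  exact ⟨γ, hγ, h⟩

theorem exists_eq_succIter_of_le_of_le {c : Cardinal.{0}} (hχc : χ ≤ c) {γ₀ : Ordinal.{0}}
    (hc : c ≤ succIter χ γ₀) : ∃ γ ≤ γ₀, c = succIter χ γ := by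
  induction γ₀ using Ordinal.limitRecOn with
  | zero => exact ⟨0, le_rfl, by rw [succIter_zero] at hc ⊢; exact le_antisymm hc hχc⟩
  | add_one γ ih =>
    rw [succIter_add_one] at hc
    rcases hc.lt_or_eq with h | h
    · obtain ⟨γ', hγ', e⟩ := ih (lt_succ_iff.1 h)
      exact ⟨γ', hγ'.trans (le_add_right le_rfl), e⟩
    · exact ⟨γ + 1, le_rfl, by rw [succIter_add_one, h]⟩
  | limit ζ hζ ih =>
    rcases hc.lt_or_eq with h | h
    · obtain ⟨γ, hγ, hcγ⟩ := exists_lt_succIter_of_lt hζ h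
      obtain ⟨γ', hγ', e⟩ := ih γ hγ hcγ.le
      exact ⟨γ', hγ'.trans hγ.le, e⟩
    · exact ⟨ζ, le_rfl, h⟩

end SuccIter

theorem IsCompleteIdeal.biUnion_mem {θ : Cardinal.{0}} {J : Set (Set Ordinal.{0})}
    (hJ : IsCompleteIdeal θ J) {X : Set Ordinal.{0}} (hX : #X < Cardinal.lift.{1} θ)
    {s : Ordinal → Set Ordinal} (hs : ∀ γ ∈ X, s γ ∈ J) : ⋃ γ ∈ X, s γ ∈ J := by
  rw [← sUnion_image]
  exact hJ _ (by rintro _ ⟨γ, hγ, rfl⟩; exact hs γ hγ) (mk_image_le.trans_lt hX)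

theorem statement8_general
    (κ lam μ : Cardinal.{0}) (hκ : κ.IsRegular)
    (J : Set (Set Ordinal.{0})) (hJ : IsIdealOn κ.ord J)
    (f : Ordinal.{0} → Ordinal.{0} → Ordinal.{0})
    (hinc : ∀ α < μ.ord, ∀ β < μ.ord, α < β → ltMod κ.ord J (f α) (f β))
    (θ χ : Cardinal.{0}) (hcomp : IsCompleteIdeal θ J)
    (ζ : Ordinal.{0}) (hζ : Order.IsSuccLimit ζ) (hζθ : ζ ≤ θ.ord)
    (hlamval : lam = succIter χ ζ)
    (δ : Ordinal.{0}) (hδμ : δ < μ.ord) (hδ : Order.IsSuccLimit δ)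
    (h1 : κ < δ.cof) (h2 : δ.cof < lam)
    (fstar : Ordinal.{0} → Ordinal.{0}) (hfstar : IsEub κ.ord J δ f fstar)
    (hsmall : {i | i < κ.ord ∧ (fstar i).cof ≤ κ} ∈ J) :
    (δ ∈ Sgd κ lam J f → {i | i < κ.ord ∧ (fstar i).cof ≠ δ.cof} ∈ J) ∧
    (δ ∈ Sbd κ lam J f → ¬ IsWeaklyGoodPt κ.ord J f δ →
      {i | i < κ.ord ∧ χ ≤ (fstar i).cof} ∈ J) := by
  have hincδ : ∀ α < δ, ∀ β < δ, α < β → ltMod κ.ord J (f α) (f β) :=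
    fun α hα β hβ => hinc α (hα.trans hδμ) β (hβ.trans hδμ)
  refine ⟨fun hgood => setOf_cof_eub_ne_cof_mem_of_isGoodPt hJ hδ.pos (by rwa [Cardinal.card_ord])
    hfstar hincδ hgood.2.2.2.2, fun _ hweak => ?_⟩
  set level : Ordinal → Set Ordinal :=
    fun γ => {i | i < κ.ord ∧ κ.ord.card < (fstar i).cof ∧ (fstar i).cof = succIter χ γ}
  obtain ⟨γ₀, hγ₀ζ, hγ₀⟩ := exists_lt_succIter_of_lt hζ (hlamval ▸ h2)
  have hlevels : ⋃ γ ∈ Iio (γ₀ + 1), level γ ∈ J := by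
    refine hcomp.biUnion_mem ?_ fun γ _ => setOf_cof_eub_eq_mem_of_not_isWeaklyGoodPt hJ hδ.pos
      hfstar hincδ hweak (by rw [Cardinal.card_ord]; exact hκ.aleph0_le) _
    rw [Cardinal.mk_Iio_ordinal, Cardinal.lift_lt, ← Cardinal.lt_ord]
    exact (hζ.add_one_lt hγ₀ζ).trans_le hζθ
  refine hJ.mono _ (hJ.union_mem _ (hJ.union_mem _ hsmall _
    (setOf_cof_lt_cof_eub_mem hJ hδ hfstar hincδ)) _ hlevels) _ fun i ⟨hi, hχi⟩ => ?_
  by_cases hκi : (fstar i).cof ≤ κ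
  · exact Or.inl (Or.inl ⟨hi, hκi⟩)
  by_cases hδi : δ.cof < (fstar i).cof
  · exact Or.inl (Or.inr ⟨hi, hδi⟩)
  obtain ⟨γ, hγ, hγi⟩ := exists_eq_succIter_of_le_of_le hχi ((not_lt.1 hδi).trans hγ₀.le)
  exact Or.inr (mem_iUnion₂.2 ⟨γ, Order.lt_add_one_iff.2 hγ, hi,
    by rw [Cardinal.card_ord]; exact not_le.1 hκi, hγi⟩)

/-- Claim 1.9(2)(i)(ii): assume `J` is `θ`-complete, `κ ≤ χ`, `ζ ≤ θ` a limit ordinal,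
`λ = χ^{+ζ}`, and `⟨f_α : α < δ⟩` has a `<_J`-eub `f*` with `{i : cf(f*(i)) ≤ κ} ∈ J`.
Then (i) if `δ` is good then `cf(f*(i)) = cf(δ)` mod `J`; (ii) if `δ` is bad and not
weakly good then `cf(f*(i)) < χ` mod `J`. -/
theorem statement8
    (κ lam μ : Cardinal.{0}) (hκ : κ.IsRegular) (hκlam : κ < lam)
    (hcfl : lam.ord.cof = κ) (hμ : μ = Order.succ lam)
    (J : Set (Set Ordinal.{0})) (hJ : IsIdealOn κ.ord J) (hJbd : boundedIdeal κ.ord ⊆ J)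
    (lamSeq : Ordinal.{0} → Cardinal.{0})
    (hreg : ∀ i < κ.ord, (lamSeq i).IsRegular)
    (hgtκ : ∀ i < κ.ord, Order.succ κ < lamSeq i)
    (hmono : ∀ i < κ.ord, ∀ j < κ.ord, i < j → lamSeq i < lamSeq j)
    (hbelow : ∀ i < κ.ord, lamSeq i < lam)
    (hsupl : ∀ c < lam, ∃ i < κ.ord, c < lamSeq i)
    (f : Ordinal.{0} → Ordinal.{0} → Ordinal.{0})
    (hf : ∀ α < μ.ord, ∀ i < κ.ord, f α i < (lamSeq i).ord)
    (hinc : ∀ α < μ.ord, ∀ β < μ.ord, α < β → ltMod κ.ord J (f α) (f β))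
    (hcofinal : ∀ g : Ordinal.{0} → Ordinal.{0}, (∀ i < κ.ord, g i < (lamSeq i).ord) →
      ∃ α < μ.ord, ltMod κ.ord J g (f α))
    (θ χ : Cardinal.{0}) (hcomp : IsCompleteIdeal θ J) (hκχ : κ ≤ χ)
    (ζ : Ordinal.{0}) (hζ : Order.IsSuccLimit ζ) (hζθ : ζ ≤ θ.ord)
    (hlamval : lam = succIter χ ζ)
    (δ : Ordinal.{0}) (hδμ : δ < μ.ord) (hδ : Order.IsSuccLimit δ)
    (h1 : κ < δ.cof) (h2 : δ.cof < lam)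
    (fstar : Ordinal.{0} → Ordinal.{0}) (hfstar : IsEub κ.ord J δ f fstar)
    (hsmall : {i | i < κ.ord ∧ (fstar i).cof ≤ κ} ∈ J) :
    (δ ∈ Sgd κ lam J f → {i | i < κ.ord ∧ (fstar i).cof ≠ δ.cof} ∈ J) ∧
    (δ ∈ Sbd κ lam J f → ¬ IsWeaklyGoodPt κ.ord J f δ →
      {i | i < κ.ord ∧ χ ≤ (fstar i).cof} ∈ J) :=
  statement8_general κ lam μ hκ J hJ f hinc θ χ hcomp ζ hζ hζθ hlamval δ hδμ hδ h1 h2 fstar hfstar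
    hsmall
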